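/- (Lemma 3.5, identity (3.9) with the exponential factor removed.) Suppose τ₁, τ₂ : (ℕ → ℂ) × (ℕ → ℂ) → ℂ are continuous and shift-smooth, and that (τ₁, τ₂) satisfies the first differential Fay identity. Then for all x, y : ℕ → ℂ and every nonzero a ∈ ℂ: a · ( τ₁(x − [a], y) · ∂₁τ₂(x, y) − ∂₁τ₁(x − [a], y) · τ₂(x, y) ) = τ₁(x − [a], y) · τ₂(x, y) − τ₁(x, y) · τ₂(x − [a], y). (Setting a = 1/z, this is equivalent to the paper's formula ∂₁(e^{−β} w₁(t₁,t₂;z)) = z · (τ₂(t₁−[z⁻¹],t₂)/τ₂(t₁,t₂)) · e^{−β+ξ(t₁;z)} for the Baker-Akhiezer function w₁ = (τ₁(t₁−[z⁻¹],t₂)/τ₁(t₁,t₂)) e^{ξ(t₁;z)} with e^β = τ₂/τ₁.) -/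
import Mathlib
open Topology Filter


/-- The shift `[s] : ℕ → ℂ`, `[s](k) = s^(k+1)/(k+1)`, representing the
sequence `(s, s²/2, s³/3, …)` of time variables. -/
noncomputable def sh (s : ℂ) : ℕ → ℂ := fun k => s ^ (k + 1) / ((k : ℂ) + 1)

/-- `∂₁ f (x, y)`: derivative of `s ↦ f(x + [s], y)` at `s = 0`. -/
noncomputable def d1 (f : (ℕ → ℂ) × (ℕ → ℂ) → ℂ) (x y : ℕ → ℂ) : ℂ :=
  deriv (fun s : ℂ => f (x + sh s, y)) 0

/-- `∂₂ f (x, y)`: derivative of `s ↦ f(x, y + [s])` at `s = 0`. -/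
noncomputable def d2 (f : (ℕ → ℂ) × (ℕ → ℂ) → ℂ) (x y : ℕ → ℂ) : ℂ :=
  deriv (fun s : ℂ => f (x, y + sh s)) 0

/-- `f` is shift-smooth: for every `(x, y)` the maps `s ↦ f(x + [s], y)` and
`s ↦ f(x, y + [s])` are differentiable on all of ℂ, and the maps
`(s, x, y) ↦ (d/ds) f(x + [s], y)` and `(s, x, y) ↦ (d/ds) f(x, y + [s])`
are jointly continuous. -/
def ShiftSmooth (f : (ℕ → ℂ) × (ℕ → ℂ) → ℂ) : Prop :=
  (∀ x y : ℕ → ℂ, Differentiable ℂ (fun s : ℂ => f (x + sh s, y))) ∧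
  (∀ x y : ℕ → ℂ, Differentiable ℂ (fun s : ℂ => f (x, y + sh s))) ∧
  Continuous (fun q : ℂ × ((ℕ → ℂ) × (ℕ → ℂ)) =>
    deriv (fun s : ℂ => f (q.2.1 + sh s, q.2.2)) q.1) ∧
  Continuous (fun q : ℂ × ((ℕ → ℂ) × (ℕ → ℂ)) =>
    deriv (fun s : ℂ => f (q.2.1, q.2.2 + sh s)) q.1)

/-- The first differential Fay identity (equation (3.7) of the paper). -/
def DiffFay1 (τ₁ τ₂ : (ℕ → ℂ) × (ℕ → ℂ) → ℂ) : Prop :=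
  ∀ x y : ℕ → ℂ, ∀ a b : ℂ, a ≠ 0 → b ≠ 0 →
    τ₁ (x, y) * d1 τ₂ (x + sh a) (y - sh b)
      - d1 τ₁ x y * τ₂ (x + sh a, y - sh b)
    = (1 / a) * (τ₁ (x, y) * τ₂ (x + sh a, y - sh b)
        - τ₁ (x + sh a, y) * τ₂ (x, y - sh b))


lemma sh_cont : Continuous sh := by
  apply continuous_pi
  intro k
  exact ((continuous_pow (k+1)).div_const _)

lemma sh_zero : sh 0 = 0 := by
  funext k; simp [sh]

/-- Lemma 3.5, identity (3.9), exponential factor removed. -/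
theorem baker_akhiezer_d1_formula (τ₁ τ₂ : (ℕ → ℂ) × (ℕ → ℂ) → ℂ)
    (hc1 : Continuous τ₁) (hc2 : Continuous τ₂)
    (hs1 : ShiftSmooth τ₁) (hs2 : ShiftSmooth τ₂)
    (hFay : DiffFay1 τ₁ τ₂) :
    ∀ x y : ℕ → ℂ, ∀ a : ℂ, a ≠ 0 →
      a * (τ₁ (x - sh a, y) * d1 τ₂ x y - d1 τ₁ (x - sh a) y * τ₂ (x, y))
        = τ₁ (x - sh a, y) * τ₂ (x, y) - τ₁ (x, y) * τ₂ (x - sh a, y) := by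
  intro x y a ha
  set x' := x - sh a with hx'
  have hxx : x' + sh a = x := by funext k; simp [hx']
  set F : ℂ → ℂ := fun b =>
    τ₁ (x', y) * d1 τ₂ x (y - sh b) - d1 τ₁ x' y * τ₂ (x, y - sh b)
      - (1 / a) * (τ₁ (x', y) * τ₂ (x, y - sh b) - τ₁ (x, y) * τ₂ (x', y - sh b))
    with hF
  have hkey : ∀ b : ℂ, b ≠ 0 → F b = 0 := by
    intro b hb
    have h := hFay x' y a b ha hb
    rw [hxx] at h
    simp only [hF]
    rw [sub_eq_zero]
    exact h
  have hcont : Continuous F := by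
    have hsh : Continuous (fun b : ℂ => y - sh b) :=
      continuous_const.sub sh_cont
    have h1 : Continuous (fun b : ℂ => d1 τ₂ x (y - sh b)) := by
      have := hs2.2.2.1
      exact this.comp (by continuity : Continuous
        (fun b : ℂ => ((0 : ℂ), ((x, y - sh b) : (ℕ → ℂ) × (ℕ → ℂ)))))
    have h2 : Continuous (fun b : ℂ => τ₂ (x, y - sh b)) :=
      hc2.comp (continuous_const.prodMk hsh)
    have h3 : Continuous (fun b : ℂ => τ₂ (x', y - sh b)) :=
      hc2.comp (continuous_const.prodMk hsh)
    exact ((continuous_const.mul h1).sub (continuous_const.mul h2)).sub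
      (continuous_const.mul ((continuous_const.mul h2).sub
        (continuous_const.mul h3)))
  have hF0 : F 0 = 0 := by
    have hne : (𝓝[≠] (0 : ℂ)).NeBot := by
      exact Module.punctured_nhds_neBot ℂ ℂ 0
    have t1 : Filter.Tendsto F (𝓝[≠] (0 : ℂ)) (𝓝 (F 0)) :=
      (hcont.tendsto 0).mono_left nhdsWithin_le_nhds
    have t2 : Filter.Tendsto F (𝓝[≠] (0 : ℂ)) (𝓝 0) := by
      apply Filter.Tendsto.congr' _ tendsto_const_nhds
      filter_upwards [self_mem_nhdsWithin] with b hb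
      exact (hkey b hb).symm
    exact tendsto_nhds_unique t1 t2
  have h0 : τ₁ (x', y) * d1 τ₂ x y - d1 τ₁ x' y * τ₂ (x, y)
      = (1 / a) * (τ₁ (x', y) * τ₂ (x, y) - τ₁ (x, y) * τ₂ (x', y)) := by
    have := hF0
    simp only [hF, sh_zero, sub_zero] at this
    exact sub_eq_zero.mp this
  rw [h0]
  field_simp
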